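/- arXiv:2601.09833 — 3 statements merged into one kernel-verified Lean document; each statement's English description precedes it below -/
import Mathlib

section
/- Let d be a positive natural number, μ_i and μ_j unit vectors in ℝ^d with α = ⟨μ_i, μ_j⟩, and β ≥ 0. Let v, w ∈ ℝ^d satisfy ‖v − μ_i‖₂ ≤ β and ‖w − μ_j‖₂ ≤ β. Let g : ℝ^d → ℝ, a > 0, K ≥ 0 and r > 0 satisfy the local linearity condition |g(h + δ) − g(h) − a·⟨δ, μ_i⟩| ≤ K·‖δ‖₂² for all h ∈ ℝ^d and all δ with ‖δ‖₂ ≤ r. Then for every h ∈ ℝ^d and every real λ with ‖v + λ·w‖₂ ≤ r, g(h + v + λ·w) ≥ g(h) + a·(1 + λα) − a·β·(1 + |λ|) − K·‖v + λ·w‖₂². -/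
open scoped RealInnerProductSpace

/-- Margin computation underlying multi-persona composition: if `v, w` are
`β`-aligned with unit directions `μi, μj` (with `α = ⟪μi, μj⟫`) and `g` is
locally linear along `μi` with slope `a`, curvature constant `K` and radius
`r`, then the composed update `v + λ • w` increases `g` by at least
`a (1 + λ α) - a β (1 + |λ|) - K ‖v + λ • w‖²`. -/
theorem composed_update_margin_lower_bound
    (d : ℕ) (hd : 0 < d)
    (μi μj : EuclideanSpace ℝ (Fin d))
    (hμi : ‖μi‖ = 1) (hμj : ‖μj‖ = 1)
    (α β : ℝ) (hα : α = ⟪μi, μj⟫) (hβ : 0 ≤ β)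
    (v w : EuclideanSpace ℝ (Fin d))
    (hv : ‖v - μi‖ ≤ β) (hw : ‖w - μj‖ ≤ β)
    (g : EuclideanSpace ℝ (Fin d) → ℝ)
    (a K r : ℝ) (ha : 0 < a) (hK : 0 ≤ K) (hr : 0 < r)
    (hlin : ∀ (h δ : EuclideanSpace ℝ (Fin d)), ‖δ‖ ≤ r →
      |g (h + δ) - g h - a * ⟪δ, μi⟫| ≤ K * ‖δ‖ ^ 2)
    (h : EuclideanSpace ℝ (Fin d)) (lam : ℝ)
    (hnorm : ‖v + lam • w‖ ≤ r) :
    g h + a * (1 + lam * α) - a * β * (1 + |lam|) - K * ‖v + lam • w‖ ^ 2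
      ≤ g (h + v + lam • w) := by
  have key := hlin h (v + lam • w) hnorm
  have h1 : |⟪v - μi, μi⟫| ≤ β := by
    calc |⟪v - μi, μi⟫| ≤ ‖v - μi‖ * ‖μi‖ := abs_real_inner_le_norm _ _
      _ ≤ β := by rw [hμi, mul_one]; exact hv
  have h2 : |⟪w - μj, μi⟫| ≤ β := by
    calc |⟪w - μj, μi⟫| ≤ ‖w - μj‖ * ‖μi‖ := abs_real_inner_le_norm _ _
      _ ≤ β := by rw [hμi, mul_one]; exact hw
  have hvi : ⟪v, μi⟫ = 1 + ⟪v - μi, μi⟫ := by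
    have : ⟪μi, μi⟫ = 1 := by
      rw [real_inner_self_eq_norm_sq, hμi]; norm_num
    rw [inner_sub_left, this]; ring
  have hwi : ⟪w, μi⟫ = α + ⟪w - μj, μi⟫ := by
    rw [inner_sub_left, hα, real_inner_comm μi μj]; ring
  have hinner : ⟪v + lam • w, μi⟫ = 1 + lam * α + ⟪v - μi, μi⟫ + lam * ⟪w - μj, μi⟫ := by
    rw [inner_add_left, real_inner_smul_left, hvi, hwi]; ring
  have hlow : 1 + lam * α - β * (1 + |lam|) ≤ ⟪v + lam • w, μi⟫ := by
    rw [hinner]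
    have e1 : -β ≤ ⟪v - μi, μi⟫ := neg_le_of_abs_le h1
    have e2 : -( |lam| * β) ≤ lam * ⟪w - μj, μi⟫ := by
      have := (abs_le.mp (by
        calc |lam * ⟪w - μj, μi⟫| = |lam| * |⟪w - μj, μi⟫| := abs_mul _ _
          _ ≤ |lam| * β := by
            exact mul_le_mul_of_nonneg_left h2 (abs_nonneg _))).1
      linarith
    nlinarith
  have hg : g h + a * ⟪v + lam • w, μi⟫ - K * ‖v + lam • w‖ ^ 2 ≤ g (h + (v + lam • w)) := by
    have := (abs_le.mp key).1
    linarith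
  have := mul_le_mul_of_nonneg_left hlow ha.le
  have hassoc : h + v + lam • w = h + (v + lam • w) := by abel
  rw [hassoc]
  nlinarith
end

section
/- Multi-Persona Composition, aligned case. Fix a₀ > 0, G ≥ 0, K ≥ 0, r > 0. There exists a constant C > 0, depending only on (a₀, G, K, r), with the following property. Let d be a positive natural number, μ_i and μ_j unit vectors in ℝ^d with α = ⟨μ_i, μ_j⟩ ≥ 0, and β ∈ [0, 1]. For k ∈ {i, j}, let L_k : ℝ^d → [0,1] be a persona loss with direction μ_k, slope a_k ∈ [a₀, 1/a₀], curvature constant K, radius r, and G-Lipschitz nonincreasing link; let v_k ∈ ℝ^d be β-aligned with μ_k. Let h ∈ ℝ^d satisfy L_i(h + v_i) ≤ ε and L_j(h + v_j) ≤ ε for some ε ≥ 0. Then for every real λ with λ ≥ 1 − α + C·β and ‖v_i + λ·v_j‖₂ ≤ r, the composed state h(λ) = h + v_i + λ·v_j satisfies L_i(h(λ)) ≤ C·(ε + |λ|·β + K·(1 + |λ|)²) and L_j(h(λ)) ≤ C·(ε + β + K·(1 + |λ|)²). -/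
open scoped RealInnerProductSpace

/-- A persona loss with direction `μ`, slope `a`, curvature constant `K`,
radius `r`, and `G`-Lipschitz nonincreasing link: `L = φ ∘ g` where
`φ : ℝ → [0,1]` is nonincreasing and `G`-Lipschitz, and `g` is locally linear
along `μ` with slope `a` up to curvature `K ‖δ‖²` within radius `r`. -/
def IsPersonaLoss {d : ℕ} (L : EuclideanSpace ℝ (Fin d) → ℝ)
    (μ : EuclideanSpace ℝ (Fin d)) (a K r G : ℝ) : Prop :=
  ∃ (φ : ℝ → ℝ) (g : EuclideanSpace ℝ (Fin d) → ℝ),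
    (∀ h, L h = φ (g h)) ∧
    (∀ s, φ s ∈ Set.Icc (0 : ℝ) 1) ∧
    Antitone φ ∧
    LipschitzWith (Real.toNNReal G) φ ∧
    ∀ (h δ : EuclideanSpace ℝ (Fin d)), ‖δ‖ ≤ r →
      |g (h + δ) - g h - a * ⟪δ, μ⟫| ≤ K * ‖δ‖ ^ 2

private lemma step_sum {d : ℕ} (g : EuclideanSpace ℝ (Fin d) → ℝ)
    (μ : EuclideanSpace ℝ (Fin d)) (a K r : ℝ)
    (H : ∀ h δ : EuclideanSpace ℝ (Fin d), ‖δ‖ ≤ r →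
      |g (h + δ) - g h - a * ⟪δ, μ⟫| ≤ K * ‖δ‖ ^ 2)
    (u : EuclideanSpace ℝ (Fin d)) (hu : ‖u‖ ≤ r) :
    ∀ n : ℕ, ∀ b, |g (b + (n : ℝ) • u) - g b - a * ((n : ℝ) * ⟪u, μ⟫)|
      ≤ (n : ℝ) * (K * ‖u‖ ^ 2) := by
  intro n
  induction n with
  | zero => intro b; simp
  | succ n ih =>
    intro b
    have h1 := H b u hu
    have h2 := ih (b + u)
    have hpt : b + ((n + 1 : ℕ) : ℝ) • u = (b + u) + (n : ℝ) • u := by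
      push_cast; module
    rw [hpt]
    have key : g ((b + u) + (n : ℝ) • u) - g b - a * (((n + 1 : ℕ) : ℝ) * ⟪u, μ⟫)
        = (g ((b + u) + (n : ℝ) • u) - g (b + u) - a * ((n : ℝ) * ⟪u, μ⟫))
          + (g (b + u) - g b - a * ⟪u, μ⟫) := by push_cast; ring
    rw [key]
    calc |_ + _| ≤ |g ((b + u) + (n : ℝ) • u) - g (b + u) - a * ((n : ℝ) * ⟪u, μ⟫)|
          + |g (b + u) - g b - a * ⟪u, μ⟫| := abs_add_le _ _
      _ ≤ (n : ℝ) * (K * ‖u‖ ^ 2) + K * ‖u‖ ^ 2 := add_le_add h2 h1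
      _ = ((n + 1 : ℕ) : ℝ) * (K * ‖u‖ ^ 2) := by push_cast; ring

private lemma global_lin {d : ℕ} (g : EuclideanSpace ℝ (Fin d) → ℝ)
    (μ : EuclideanSpace ℝ (Fin d)) (a K r : ℝ) (hK : 0 ≤ K) (hr : 0 < r)
    (H : ∀ h δ : EuclideanSpace ℝ (Fin d), ‖δ‖ ≤ r →
      |g (h + δ) - g h - a * ⟪δ, μ⟫| ≤ K * ‖δ‖ ^ 2)
    (b w : EuclideanSpace ℝ (Fin d)) :
    |g (b + w) - g b - a * ⟪w, μ⟫| ≤ K * ‖w‖ ^ 2 := by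
  set n : ℕ := max 1 ⌈‖w‖ / r⌉₊ with hn
  have hn1 : (1 : ℝ) ≤ (n : ℝ) := by
    exact_mod_cast Nat.one_le_iff_ne_zero.mpr (by positivity)
  have hnpos : (0 : ℝ) < (n : ℝ) := by linarith
  have hceil : ‖w‖ / r ≤ (n : ℝ) :=
    le_trans (Nat.le_ceil _) (by exact_mod_cast Nat.le_max_right 1 ⌈‖w‖ / r⌉₊)
  set u : EuclideanSpace ℝ (Fin d) := ((n : ℝ))⁻¹ • w with hu
  have hnu : (n : ℝ) • u = w := by
    rw [hu, smul_smul, mul_inv_cancel₀ (ne_of_gt hnpos), one_smul]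
  have hunorm : ‖u‖ = ‖w‖ / (n : ℝ) := by
    rw [hu, norm_smul, norm_inv, Real.norm_natCast]
    ring
  have hur : ‖u‖ ≤ r := by
    rw [hunorm, div_le_iff₀ hnpos]
    calc ‖w‖ = (‖w‖ / r) * r := by field_simp
      _ ≤ (n : ℝ) * r := by
          apply mul_le_mul_of_nonneg_right hceil hr.le
      _ = r * (n : ℝ) := by ring
  have := step_sum g μ a K r H u hur n b
  rw [hnu] at this
  have hiu : (n : ℝ) * ⟪u, μ⟫ = ⟪w, μ⟫ := by
    rw [← real_inner_smul_left, hnu]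
  rw [hiu] at this
  refine this.trans ?_
  rw [hunorm]
  have : (n : ℝ) * (K * (‖w‖ / (n : ℝ)) ^ 2) = K * ‖w‖ ^ 2 / (n : ℝ) := by
    field_simp
  rw [this]
  apply div_le_self (by positivity) hn1

private lemma sq_err {K L M : ℝ} (hK : 0 ≤ K) (hL0 : 0 ≤ L) (hLM : L ≤ M) :
    K * L ^ 2 ≤ K * M ^ 2 := by
  nlinarith [mul_nonneg hK (mul_nonneg (sub_nonneg.2 hLM) (by linarith : (0:ℝ) ≤ M + L))]

private lemma base_i {lam x : ℝ} (h1 : 0 ≤ lam) (_h2 : 0 ≤ x) (h3 : x ≤ 2) :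
    lam * x ≤ 2 * (1 + lam) := by nlinarith

private lemma dir_i {ai A lam β ip α : ℝ} (hai : 0 < ai) (hA : ai ≤ A)
    (hlam : 0 ≤ lam) (hβ : 0 ≤ β) (hα : 0 ≤ α) (hip : α - β ≤ ip) :
    -(A * lam * β) ≤ ai * (lam * ip) := by
  have h1 : lam * (α - β) ≤ lam * ip := mul_le_mul_of_nonneg_left hip hlam
  nlinarith [mul_nonneg hai.le (sub_nonneg.2 h1),
    mul_nonneg (mul_nonneg hai.le hlam) hα,
    mul_nonneg (sub_nonneg.2 hA) (mul_nonneg hlam hβ)]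

private lemma win_j {α β lam x y : ℝ} (hα0 : 0 ≤ α) (hα1 : α ≤ 1)
    (hβ0 : 0 ≤ β) (ht : -α ≤ lam - 1) (hx : α - β ≤ x) (hy0 : 0 ≤ y)
    (hy1 : y ≤ 1 + β) : -(2 * β) ≤ x + (lam - 1) * y := by
  nlinarith [mul_nonneg (by linarith : (0:ℝ) ≤ lam - 1 + α) hy0,
    mul_nonneg hα0 (by linarith : (0:ℝ) ≤ 1 + β - y),
    mul_nonneg (by linarith : (0:ℝ) ≤ 1 - α) hβ0]

private lemma dir_j {aj A β z : ℝ} (haj : 0 < aj) (hA : aj ≤ A) (hβ : 0 ≤ β)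
    (hz : -(2 * β) ≤ z) : -(2 * A * β) ≤ aj * z := by
  nlinarith [mul_nonneg haj.le (by linarith : (0:ℝ) ≤ z + 2 * β),
    mul_nonneg hβ (by linarith : (0:ℝ) ≤ A - aj)]

private lemma final_i {G GA ε P Q : ℝ} (hG : 0 ≤ G) (hGA : 0 ≤ GA)
    (hε : 0 ≤ ε) (hP : 0 ≤ P) (hQ : 0 ≤ Q) :
    ε + (GA * P + 4 * (G * Q)) ≤ (1 + 2 * GA + 16 * G) * (ε + P + Q) := by
  nlinarith [mul_nonneg hGA hε, mul_nonneg hG hε, mul_nonneg hGA hP,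
    mul_nonneg hG hP, mul_nonneg hGA hQ, mul_nonneg hG hQ]

private lemma final_j {G GA ε β Q : ℝ} (hG : 0 ≤ G) (hGA : 0 ≤ GA)
    (hε : 0 ≤ ε) (hβ : 0 ≤ β) (hQ : 0 ≤ Q) :
    ε + (2 * (GA * β) + 16 * (G * Q)) ≤ (1 + 2 * GA + 16 * G) * (ε + β + Q) := by
  nlinarith [mul_nonneg hGA hε, mul_nonneg hG hε, mul_nonneg hGA hβ,
    mul_nonneg hG hβ, mul_nonneg hGA hQ, mul_nonneg hG hQ]

private lemma phi_bound (φ : ℝ → ℝ) (G : ℝ) (hG : 0 ≤ G) (hmono : Antitone φ)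
    (hlip : LipschitzWith (Real.toNNReal G) φ) {x y Δ ε : ℝ}
    (hΔ : 0 ≤ Δ) (hxy : y - Δ ≤ x) (hy : φ y ≤ ε) : φ x ≤ ε + G * Δ := by
  have h1 : φ x ≤ φ (y - Δ) := hmono hxy
  have h2 : |φ (y - Δ) - φ y| ≤ G * |y - Δ - y| := by
    have := hlip.dist_le_mul (y - Δ) y
    rwa [Real.dist_eq, Real.dist_eq, Real.coe_toNNReal G hG] at this
  have h3 : |y - Δ - y| = Δ := by
    have : y - Δ - y = -Δ := by ring
    rw [this, abs_neg, abs_of_nonneg hΔ]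
  rw [h3] at h2
  have := abs_le.mp h2
  linarith [this.2]

set_option maxHeartbeats 4000000 in
/-- Multi-Persona Composition, aligned case (`α ≥ 0`): for `λ ≥ 1 - α + C β`,
the composed state `h + vᵢ + λ • vⱼ` keeps both persona losses small. -/
theorem multi_persona_composition_aligned
    (a₀ G K r : ℝ) (ha₀ : 0 < a₀) (hG : 0 ≤ G) (hK : 0 ≤ K) (hr : 0 < r) :
    ∃ C > 0,
      ∀ (d : ℕ), 0 < d →
      ∀ (μi μj : EuclideanSpace ℝ (Fin d)), ‖μi‖ = 1 → ‖μj‖ = 1 →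
      ∀ α : ℝ, α = ⟪μi, μj⟫ → 0 ≤ α →
      ∀ β : ℝ, β ∈ Set.Icc (0 : ℝ) 1 →
      ∀ (Li Lj : EuclideanSpace ℝ (Fin d) → ℝ) (ai aj : ℝ),
        ai ∈ Set.Icc a₀ a₀⁻¹ → aj ∈ Set.Icc a₀ a₀⁻¹ →
        IsPersonaLoss Li μi ai K r G → IsPersonaLoss Lj μj aj K r G →
      ∀ (vi vj : EuclideanSpace ℝ (Fin d)), ‖vi - μi‖ ≤ β → ‖vj - μj‖ ≤ β →
      ∀ (h : EuclideanSpace ℝ (Fin d)) (ε : ℝ), 0 ≤ ε →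
        Li (h + vi) ≤ ε → Lj (h + vj) ≤ ε →
      ∀ lam : ℝ, 1 - α + C * β ≤ lam → ‖vi + lam • vj‖ ≤ r →
        Li (h + vi + lam • vj) ≤ C * (ε + |lam| * β + K * (1 + |lam|) ^ 2) ∧
        Lj (h + vi + lam • vj) ≤ C * (ε + β + K * (1 + |lam|) ^ 2) := by
  have hA : (0 : ℝ) < a₀⁻¹ := inv_pos.mpr ha₀
  set A := a₀⁻¹ with hAdef
  set C := 1 + 2 * G * A + 16 * G with hCdef
  have hGA : 0 ≤ G * A := mul_nonneg hG hA.le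
  have hC : 0 < C := by rw [hCdef]; nlinarith
  refine ⟨C, hC, ?_⟩
  intro d _ μi μj hμi hμj α hα hα0 β hβ Li Lj ai aj hai haj hPi hPj
    vi vj hvi hvj h ε hε hLie hLje lam hlam hrad
  obtain ⟨hβ0, hβ1⟩ := hβ
  obtain ⟨hai0, haiA⟩ := hai
  obtain ⟨haj0, hajA⟩ := haj
  have hai0' : 0 < ai := lt_of_lt_of_le ha₀ hai0
  have haj0' : 0 < aj := lt_of_lt_of_le ha₀ haj0
  obtain ⟨φi, gi, hLieq, hφi01, hφimono, hφilip, hgi⟩ := hPi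
  obtain ⟨φj, gj, hLjeq, hφj01, hφjmono, hφjlip, hgj⟩ := hPj
  -- α ≤ 1
  have hα1 : α ≤ 1 := by
    have := real_inner_le_norm μi μj
    rw [hμi, hμj] at this
    simpa [hα] using this
  -- lam ≥ 0
  have hlam0 : 0 ≤ lam := by linarith [mul_nonneg hC.le hβ0]
  have habslam : |lam| = lam := abs_of_nonneg hlam0
  -- norm bounds
  have hvjn : ‖vj‖ ≤ 2 := by
    have h1 : ‖vj‖ ≤ ‖μj‖ + ‖vj - μj‖ := by
      have := norm_add_le μj (vj - μj)
      simpa using this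
    rw [hμj] at h1; linarith
  have hvin : ‖vi‖ ≤ 2 := by
    have h1 : ‖vi‖ ≤ ‖μi‖ + ‖vi - μi‖ := by
      have := norm_add_le μi (vi - μi)
      simpa using this
    rw [hμi] at h1; linarith
  -- inner product bounds
  have hinji : α - β ≤ ⟪vj, μi⟫ := by
    have h1 : |⟪vj - μj, μi⟫| ≤ β := by
      have := abs_real_inner_le_norm (vj - μj) μi
      rw [hμi] at this
      calc |⟪vj - μj, μi⟫| ≤ ‖vj - μj‖ * 1 := this
        _ ≤ β := by linarith
    have h2 : ⟪vj - μj, μi⟫ = ⟪vj, μi⟫ - ⟪μj, μi⟫ := inner_sub_left _ _ _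
    have h3 : ⟪μj, μi⟫ = α := by rw [real_inner_comm, ← hα]
    have := (abs_le.mp h1).1
    rw [h2, h3] at this
    linarith
  have hinij : α - β ≤ ⟪vi, μj⟫ := by
    have h1 : |⟪vi - μi, μj⟫| ≤ β := by
      have := abs_real_inner_le_norm (vi - μi) μj
      rw [hμj] at this
      calc |⟪vi - μi, μj⟫| ≤ ‖vi - μi‖ * 1 := this
        _ ≤ β := by linarith
    have h2 : ⟪vi - μi, μj⟫ = ⟪vi, μj⟫ - ⟪μi, μj⟫ := inner_sub_left _ _ _
    have := (abs_le.mp h1).1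
    rw [h2, ← hα] at this
    linarith
  have hinjj : |⟪vj, μj⟫ - 1| ≤ β := by
    have h1 : |⟪vj - μj, μj⟫| ≤ β := by
      have := abs_real_inner_le_norm (vj - μj) μj
      rw [hμj] at this
      calc |⟪vj - μj, μj⟫| ≤ ‖vj - μj‖ * 1 := this
        _ ≤ β := by linarith
    have h2 : ⟪vj - μj, μj⟫ = ⟪vj, μj⟫ - ⟪μj, μj⟫ := inner_sub_left _ _ _
    have h3 : ⟪μj, μj⟫ = 1 := by
      rw [real_inner_self_eq_norm_sq, hμj]; norm_num
    rw [h2, h3] at h1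
    exact h1
  constructor
  · -- Li bound
    have key := global_lin gi μi ai K r hK hr hgi (h + vi) (lam • vj)
    have hin : ⟪lam • vj, μi⟫ = lam * ⟪vj, μi⟫ := real_inner_smul_left _ _ _
    have hnrm : ‖lam • vj‖ = lam * ‖vj‖ := by
      rw [norm_smul, Real.norm_eq_abs, habslam]
    rw [hin, hnrm] at key
    have herr : K * (lam * ‖vj‖) ^ 2 ≤ 4 * K * (1 + lam) ^ 2 := by
      calc K * (lam * ‖vj‖) ^ 2 ≤ K * (2 * (1 + lam)) ^ 2 :=
            sq_err hK (mul_nonneg hlam0 (norm_nonneg vj))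
              (base_i hlam0 (norm_nonneg vj) hvjn)
        _ = 4 * K * (1 + lam) ^ 2 := by ring
    have hdir : -(A * lam * β) ≤ ai * (lam * ⟪vj, μi⟫) :=
      dir_i hai0' haiA hlam0 hβ0 hα0 hinji
    have hΔ : 0 ≤ A * lam * β + 4 * K * (1 + lam) ^ 2 := by positivity
    have hglow : gi (h + vi) - (A * lam * β + 4 * K * (1 + lam) ^ 2)
        ≤ gi (h + vi + lam • vj) := by
      have := (abs_le.mp key).1
      linarith
    have hval : φi (gi (h + vi)) ≤ ε := by rw [← hLieq]; exact hLie
    have := phi_bound φi G hG hφimono hφilip hΔ hglow hval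
    rw [hLieq, habslam]
    refine this.trans ?_
    calc ε + G * (A * lam * β + 4 * K * (1 + lam) ^ 2)
        = ε + ((G * A) * (lam * β) + 4 * (G * (K * (1 + lam) ^ 2))) := by ring
      _ ≤ (1 + 2 * (G * A) + 16 * G) * (ε + lam * β + K * (1 + lam) ^ 2) :=
          final_i hG hGA hε (mul_nonneg hlam0 hβ0)
            (mul_nonneg hK (sq_nonneg (1 + lam)))
      _ = C * (ε + lam * β + K * (1 + lam) ^ 2) := by rw [hCdef]; ring
  · -- Lj bound
    have hpt : h + vi + lam • vj = (h + vj) + (vi + (lam - 1) • vj) := by module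
    have key := global_lin gj μj aj K r hK hr hgj (h + vj) (vi + (lam - 1) • vj)
    rw [← hpt] at key
    have hin : ⟪vi + (lam - 1) • vj, μj⟫ = ⟪vi, μj⟫ + (lam - 1) * ⟪vj, μj⟫ := by
      rw [inner_add_left, real_inner_smul_left]
    have hwn : ‖vi + (lam - 1) • vj‖ ≤ 4 + 2 * lam := by
      have h1 : ‖vi + (lam - 1) • vj‖ ≤ ‖vi‖ + ‖(lam - 1) • vj‖ := norm_add_le _ _
      have h2 : ‖(lam - 1) • vj‖ = |lam - 1| * ‖vj‖ := by
        rw [norm_smul, Real.norm_eq_abs]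
      have h3 : |lam - 1| ≤ lam + 1 := by
        rw [abs_le]; constructor <;> linarith
      have h4 : |lam - 1| * ‖vj‖ ≤ (lam + 1) * 2 := by
        apply mul_le_mul h3 hvjn (norm_nonneg _) (by linarith)
      rw [h2] at h1
      linarith
    have herr : K * ‖vi + (lam - 1) • vj‖ ^ 2 ≤ 16 * K * (1 + lam) ^ 2 := by
      calc K * ‖vi + (lam - 1) • vj‖ ^ 2 ≤ K * (4 * (1 + lam)) ^ 2 :=
            sq_err hK (norm_nonneg _) (by linarith)
        _ = 16 * K * (1 + lam) ^ 2 := by ring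
    -- directional lower bound
    have hs0 : 0 ≤ ⟪vj, μj⟫ := by
      have := (abs_le.mp hinjj).1; linarith
    have hs1 : ⟪vj, μj⟫ ≤ 1 + β := by
      have := (abs_le.mp hinjj).2; linarith
    have ht : -α ≤ lam - 1 := by linarith [mul_nonneg hC.le hβ0]
    have hwin : -(2 * β) ≤ ⟪vi + (lam - 1) • vj, μj⟫ := by
      rw [hin]; exact win_j hα0 hα1 hβ0 ht hinij hs0 hs1
    have hdir : -(2 * A * β) ≤ aj * ⟪vi + (lam - 1) • vj, μj⟫ :=
      dir_j haj0' hajA hβ0 hwin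
    have hΔ : 0 ≤ 2 * A * β + 16 * K * (1 + lam) ^ 2 := by positivity
    have hglow : gj (h + vj) - (2 * A * β + 16 * K * (1 + lam) ^ 2)
        ≤ gj (h + vi + lam • vj) := by
      have := (abs_le.mp key).1
      linarith
    have hval : φj (gj (h + vj)) ≤ ε := by rw [← hLjeq]; exact hLje
    have := phi_bound φj G hG hφjmono hφjlip hΔ hglow hval
    rw [hLjeq, habslam]
    refine this.trans ?_
    calc ε + G * (2 * A * β + 16 * K * (1 + lam) ^ 2)
        = ε + (2 * ((G * A) * β) + 16 * (G * (K * (1 + lam) ^ 2))) := by ring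
      _ ≤ (1 + 2 * (G * A) + 16 * G) * (ε + β + K * (1 + lam) ^ 2) :=
          final_j hG hGA hε hβ0 (mul_nonneg hK (sq_nonneg (1 + lam)))
      _ = C * (ε + β + K * (1 + lam) ^ 2) := by rw [hCdef]; ring
end

section
/- Out-of-Domain Persona Synthesis. Fix a₀ > 0, G ≥ 0, K ≥ 0, r > 0 and a finite index set I. There exist constants c ∈ (0, 1), C₁ > 0 and C > 0, depending only on (a₀, G, K, r, |I|), with the following property. Let d be a positive natural number, let {μ_i}_{i ∈ I} be an orthonormal family of vectors in ℝ^d, let μ⋆ be a unit vector in ℝ^d decomposed as μ⋆ = Σ_{i ∈ I} γ_i·μ_i + κ·μ⊥ where μ⊥ is a unit vector orthogonal to every μ_i, γ_i ∈ ℝ, and |κ| ≤ κ₀ for some κ₀ ≥ 0. Let β ∈ [0, 1]; for each i ∈ I let v_i ∈ ℝ^d be β-aligned with μ_i. Let L⋆ : ℝ^d → [0,1] be a persona loss with direction μ⋆, slope a⋆ ∈ [a₀, 1/a₀], curvature constant K, radius r, and G-Lipschitz nonincreasing link, and let h ∈ ℝ^d and v⋆ ∈ ℝ^d be β-aligned with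 μ⋆ such that L⋆(h + v⋆) ≤ ε for some ε ≥ 0. Suppose the coefficients λ = (λ_i)_{i ∈ I} satisfy Σ_{i ∈ I} λ_i·γ_i ≥ 1 + c, Σ_{i ∈ I} λ_i·γ_i² ≥ 1 + c, |λ_i|·β ≤ C₁·c for every i ∈ I, and ‖Σ_{i ∈ I} λ_i·v_i‖₂ ≤ r. Then L⋆(h + Σ_{i ∈ I} λ_i·v_i) ≤ C·(ε + β + κ₀² + K·(Σ_{i ∈ I} |λ_i|)²). -/
open scoped RealInnerProductSpace

lemma persona_multistep {d : ℕ} (g : EuclideanSpace ℝ (Fin d) → ℝ)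
    (μ : EuclideanSpace ℝ (Fin d)) (a K r : ℝ)
    (hg : ∀ (h δ : EuclideanSpace ℝ (Fin d)), ‖δ‖ ≤ r →
      |g (h + δ) - g h - a * ⟪δ, μ⟫| ≤ K * ‖δ‖ ^ 2) :
    ∀ (n : ℕ) (h δ : EuclideanSpace ℝ (Fin d)), ‖δ‖ ≤ r →
      g (h + n • δ) ≤ g h + n * (a * ⟪δ, μ⟫ + K * ‖δ‖ ^ 2) := by
  intro n
  induction n with
  | zero => intro h δ _; simp
  | succ n ih =>
      intro h δ hδ
      have h1 := ih h δ hδ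
      have h2 := abs_le.mp (hg (h + n • δ) δ hδ)
      have e : h + (n + 1) • δ = (h + n • δ) + δ := by
        rw [succ_nsmul]; abel
      rw [e]
      push_cast
      linarith [h2.2]

set_option maxHeartbeats 1000000 in
/-- Out-of-Domain Persona Synthesis: if the out-of-domain direction `μ⋆` lies
mostly in the span of the orthonormal in-domain directions `μ i`, then a
suitable linear combination `∑ λᵢ • vᵢ` of the in-domain persona updates
expresses the out-of-domain trait (keeps `L⋆` small). -/
theorem persona_ood_synthesis
    (a₀ G K r : ℝ) (ha₀ : 0 < a₀) (hG : 0 ≤ G) (hK : 0 ≤ K) (hr : 0 < r)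
    (I : Type*) [Fintype I] :
    ∃ c ∈ Set.Ioo (0 : ℝ) 1, ∃ C₁ > 0, ∃ C > 0,
      ∀ (d : ℕ), 0 < d →
      ∀ (μ : I → EuclideanSpace ℝ (Fin d)), Orthonormal ℝ μ →
      ∀ (μstar μperp : EuclideanSpace ℝ (Fin d)), ‖μstar‖ = 1 → ‖μperp‖ = 1 →
        (∀ i, ⟪μperp, μ i⟫ = 0) →
      ∀ (γ : I → ℝ) (κ κ₀ : ℝ), 0 ≤ κ₀ → |κ| ≤ κ₀ →
        μstar = (∑ i, γ i • μ i) + κ • μperp →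
      ∀ β : ℝ, β ∈ Set.Icc (0 : ℝ) 1 →
      ∀ (v : I → EuclideanSpace ℝ (Fin d)), (∀ i, ‖v i - μ i‖ ≤ β) →
      ∀ (Lstar : EuclideanSpace ℝ (Fin d) → ℝ) (astar : ℝ),
        astar ∈ Set.Icc a₀ a₀⁻¹ → IsPersonaLoss Lstar μstar astar K r G →
      ∀ (h vstar : EuclideanSpace ℝ (Fin d)), ‖vstar - μstar‖ ≤ β →
      ∀ ε : ℝ, 0 ≤ ε → Lstar (h + vstar) ≤ ε →
      ∀ lam : I → ℝ,
        1 + c ≤ ∑ i, lam i * γ i →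
        1 + c ≤ ∑ i, lam i * γ i ^ 2 →
        (∀ i, |lam i| * β ≤ C₁ * c) →
        ‖∑ i, lam i • v i‖ ≤ r →
        Lstar (h + ∑ i, lam i • v i) ≤
          C * (ε + β + κ₀ ^ 2 + K * (∑ i, |lam i|) ^ 2) := by
  have hcard : (0:ℝ) ≤ (Fintype.card I : ℝ) := Nat.cast_nonneg _
  refine ⟨1/2, ⟨by norm_num, by norm_num⟩,
    1/(2*((Fintype.card I : ℝ)+1)), by positivity,
    1 + G * a₀⁻¹ + 8 * G, by positivity, ?_⟩
  intro d hd μ hμ μstar μperp hμs hμp hperp γ κ κ₀ hκ₀ hκ hdecomp β hβ v hv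
    Lstar astar hastar hL h vstar hvstar ε hε hLε lam hlg hlg2 hlb hwr
  obtain ⟨φ, g, hLφ, hφ01, hφanti, hφlip, hg⟩ := hL
  have hβ0 : 0 ≤ β := hβ.1
  have hβ1 : β ≤ 1 := hβ.2
  have hapos : 0 < astar := lt_of_lt_of_le ha₀ hastar.1
  have haU : astar ≤ a₀⁻¹ := hastar.2
  set w := ∑ i, lam i • v i with hw
  set S := ∑ i, |lam i| with hS
  -- γ identification
  have hγ : ∀ i, ⟪μ i, μstar⟫ = γ i := by
    intro i
    rw [hdecomp, inner_add_right, hμ.inner_right_fintype γ i, real_inner_smul_right,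
      real_inner_comm, hperp i]
    ring
  have hγle : ∀ i, |γ i| ≤ 1 := by
    intro i
    rw [← hγ i]
    calc |⟪μ i, μstar⟫| ≤ ‖μ i‖ * ‖μstar‖ := abs_real_inner_le_norm _ _
      _ = 1 := by rw [hμ.1 i, hμs]; norm_num
  have hS1 : 1 ≤ S := by
    have hle : ∑ i, lam i * γ i ≤ S := by
      refine Finset.sum_le_sum fun i _ => ?_
      calc lam i * γ i ≤ |lam i * γ i| := le_abs_self _
        _ = |lam i| * |γ i| := abs_mul _ _
        _ ≤ |lam i| * 1 := mul_le_mul_of_nonneg_left (hγle i) (abs_nonneg _)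
        _ = |lam i| := mul_one _
    linarith
  have hvn : ∀ i, ‖v i‖ ≤ 2 := by
    intro i
    have h1 := norm_sub_norm_le (v i) (μ i)
    have h2 := hv i
    have h3 := hμ.1 i
    linarith
  have hwS : ‖w‖ ≤ 2 * S := by
    calc ‖w‖ ≤ ∑ i, ‖lam i • v i‖ := norm_sum_le _ _
      _ = ∑ i, |lam i| * ‖v i‖ := by simp [norm_smul]
      _ ≤ ∑ i, |lam i| * 2 :=
        Finset.sum_le_sum fun i _ => mul_le_mul_of_nonneg_left (hvn i) (abs_nonneg _)
      _ = 2 * S := by rw [hS, Finset.mul_sum]; exact Finset.sum_congr rfl fun i _ => by ring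
  have hvs2 : ‖vstar‖ ≤ 2 := by
    have h1 := norm_sub_norm_le vstar μstar
    rw [hμs] at h1
    linarith
  -- inner product bounds
  have hμsself : ⟪μstar, μstar⟫ = 1 := by
    rw [real_inner_self_eq_norm_sq, hμs]; norm_num
  have hvsμ : ⟪vstar, μstar⟫ ≤ 1 + β := by
    have e1 : ⟪vstar, μstar⟫ = ⟪μstar, μstar⟫ + ⟪vstar - μstar, μstar⟫ := by
      rw [← inner_add_left]; congr 1; abel
    have e3 : ⟪vstar - μstar, μstar⟫ ≤ β := by
      refine le_trans (le_abs_self _) (le_trans (abs_real_inner_le_norm _ _) ?_)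
      rw [hμs]; simpa using hvstar
    linarith [e1, hμsself, e3]
  have hwμ : 1 + (1/4 : ℝ) ≤ ⟪w, μstar⟫ := by
    have e1 : ⟪w, μstar⟫ = ∑ i, lam i * ⟪v i, μstar⟫ := by
      rw [hw, sum_inner]
      exact Finset.sum_congr rfl fun i _ => real_inner_smul_left _ _ _
    have e2 : ∀ i, lam i * γ i - |lam i| * β ≤ lam i * ⟪v i, μstar⟫ := by
      intro i
      have e3 : ⟪v i, μstar⟫ = γ i + ⟪v i - μ i, μstar⟫ := by
        rw [← hγ i, ← inner_add_left]; congr 1; abel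
      have e4 : |⟪v i - μ i, μstar⟫| ≤ β := by
        refine le_trans (abs_real_inner_le_norm _ _) ?_
        rw [hμs]; simpa using hv i
      have e5 : -( |lam i| * β) ≤ lam i * ⟪v i - μ i, μstar⟫ := by
        have := neg_abs_le (lam i * ⟪v i - μ i, μstar⟫)
        have h6 : |lam i * ⟪v i - μ i, μstar⟫| ≤ |lam i| * β := by
          rw [abs_mul]
          exact mul_le_mul_of_nonneg_left e4 (abs_nonneg _)
        linarith
      rw [e3]
      nlinarith [e5]
    have e6 : ∑ i, (lam i * γ i - |lam i| * β) ≤ ⟪w, μstar⟫ := by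
      rw [e1]; exact Finset.sum_le_sum fun i _ => e2 i
    rw [Finset.sum_sub_distrib] at e6
    have e7 : ∑ i, |lam i| * β ≤ (Fintype.card I : ℝ) * (1/(2*((Fintype.card I : ℝ)+1)) * (1/2)) := by
      calc ∑ i, |lam i| * β ≤ ∑ _i : I, (1/(2*((Fintype.card I : ℝ)+1)) * (1/2)) :=
            Finset.sum_le_sum fun i _ => hlb i
        _ = (Fintype.card I : ℝ) * (1/(2*((Fintype.card I : ℝ)+1)) * (1/2)) := by
            rw [Finset.sum_const, Finset.card_univ, nsmul_eq_mul]
    have e8 : (Fintype.card I : ℝ) * (1/(2*((Fintype.card I : ℝ)+1)) * (1/2)) ≤ 1/4 := by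
      have h0 : (0:ℝ) < 2*((Fintype.card I : ℝ)+1) := by positivity
      rw [one_div, mul_comm ((2*((Fintype.card I : ℝ)+1))⁻¹) (1/2), ← mul_assoc,
        ← div_eq_mul_inv, div_le_iff₀ h0]
      linarith
    linarith
  -- curvature bounds
  have h8 : g h + astar * ⟪w, μstar⟫ - K * ‖w‖ ^ 2 ≤ g (h + w) := by
    have := abs_le.mp (hg h w hwr)
    linarith [this.1]
  have h9 : g (h + vstar) ≤ g h + astar * ⟪vstar, μstar⟫ + 4 * K := by
    obtain ⟨n, hn1n, hnr⟩ : ∃ n : ℕ, 1 ≤ n ∧ 2 ≤ (n:ℝ) * r := by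
      refine ⟨max ⌈2/r⌉₊ 1, le_max_right _ _, ?_⟩
      have h1 : 2/r ≤ ((max ⌈2/r⌉₊ 1 : ℕ):ℝ) :=
        le_trans (Nat.le_ceil _) (Nat.cast_le.mpr (le_max_left _ _))
      calc (2:ℝ) = (2/r) * r := by field_simp
        _ ≤ _ := mul_le_mul_of_nonneg_right h1 hr.le
    have hn1 : (1:ℝ) ≤ (n:ℝ) := by exact_mod_cast hn1n
    have hnpos : (0:ℝ) < (n:ℝ) := lt_of_lt_of_le one_pos hn1
    have hn0 : (n:ℝ) ≠ 0 := ne_of_gt hnpos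
    set δ := ((n:ℝ))⁻¹ • vstar with hδdef
    have hδnorm : ‖δ‖ = (n:ℝ)⁻¹ * ‖vstar‖ := by
      rw [hδdef, norm_smul, Real.norm_eq_abs, abs_of_pos (by positivity)]
    have hδ : ‖δ‖ ≤ r := by
      rw [hδnorm, inv_mul_le_iff₀ hnpos]
      linarith
    have key := persona_multistep g μstar astar K r hg n h δ hδ
    have hnδ : (n : ℕ) • δ = vstar := by
      rw [hδdef, ← Nat.cast_smul_eq_nsmul ℝ n, smul_smul, mul_inv_cancel₀ hn0, one_smul]
    rw [hnδ] at key
    have hinner : ⟪δ, μstar⟫ = (n:ℝ)⁻¹ * ⟪vstar, μstar⟫ := real_inner_smul_left _ _ _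
    have hbound : (n:ℝ) * (astar * ⟪δ, μstar⟫ + K * ‖δ‖^2) ≤
        astar * ⟪vstar, μstar⟫ + 4*K := by
      rw [hinner, hδnorm]
      have e1 : (n:ℝ) * (astar * ((n:ℝ)⁻¹ * ⟪vstar, μstar⟫)) = astar * ⟪vstar, μstar⟫ := by
        field_simp
      have e2 : (n:ℝ) * (K * ((n:ℝ)⁻¹ * ‖vstar‖)^2) = K * ‖vstar‖^2 * (n:ℝ)⁻¹ := by
        field_simp
      have e3 : K * ‖vstar‖^2 * (n:ℝ)⁻¹ ≤ 4*K := by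
        have h4 : ‖vstar‖^2 ≤ 4 := by nlinarith [norm_nonneg vstar]
        have h5 : (n:ℝ)⁻¹ ≤ 1 := inv_le_one_of_one_le₀ hn1
        have h6 : (0:ℝ) ≤ (n:ℝ)⁻¹ := by positivity
        have t1 : K * ‖vstar‖^2 ≤ K * 4 := mul_le_mul_of_nonneg_left h4 hK
        have t2 : K * ‖vstar‖^2 * (n:ℝ)⁻¹ ≤ K * 4 * (n:ℝ)⁻¹ :=
          mul_le_mul_of_nonneg_right t1 h6
        have t3 : K * 4 * (n:ℝ)⁻¹ ≤ K * 4 * 1 :=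
          mul_le_mul_of_nonneg_left h5 (by positivity)
        linarith
      rw [mul_add, e1, e2]
      linarith
    linarith
  -- combine
  have hΔ : g (h + vstar) - (a₀⁻¹ * β + 8*K*S^2) ≤ g (h + w) := by
    have k1 : astar * (1/4 - β) ≤ astar * (⟪w, μstar⟫ - ⟪vstar, μstar⟫) :=
      mul_le_mul_of_nonneg_left (by linarith) hapos.le
    have k2 : -(a₀⁻¹*β) ≤ astar * (1/4 - β) := by
      nlinarith [hapos.le, mul_le_mul_of_nonneg_right haU hβ0]
    have k3 : K * ‖w‖^2 ≤ 4*K*S^2 := by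
      have h4 : ‖w‖^2 ≤ (2*S)^2 := pow_le_pow_left₀ (norm_nonneg w) hwS 2
      nlinarith [hK]
    have k4 : 4*K ≤ 4*K*S^2 := by
      have hS2 : 1 ≤ S^2 := by nlinarith [hS1]
      have := mul_le_mul_of_nonneg_left hS2 hK
      linarith
    have k5 : astar * ⟪w, μstar⟫ - astar * ⟪vstar, μstar⟫ =
        astar * (⟪w, μstar⟫ - ⟪vstar, μstar⟫) := by ring
    linarith
  have hΔ0 : (0:ℝ) ≤ a₀⁻¹ * β + 8*K*S^2 := by positivity
  have hmono : φ (g (h + w)) ≤ φ (g (h + vstar) - (a₀⁻¹*β + 8*K*S^2)) := hφanti hΔ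
  have hlip : φ (g (h + vstar) - (a₀⁻¹*β + 8*K*S^2)) ≤
      φ (g (h + vstar)) + G * (a₀⁻¹*β + 8*K*S^2) := by
    have hd := hφlip.dist_le_mul (g (h+vstar) - (a₀⁻¹*β + 8*K*S^2)) (g (h+vstar))
    rw [Real.dist_eq, Real.dist_eq, Real.coe_toNNReal G hG] at hd
    have habs : |g (h+vstar) - (a₀⁻¹*β + 8*K*S^2) - g (h+vstar)| = a₀⁻¹*β + 8*K*S^2 := by
      have : g (h+vstar) - (a₀⁻¹*β + 8*K*S^2) - g (h+vstar) = -(a₀⁻¹*β + 8*K*S^2) := by ring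
      rw [this, abs_neg, abs_of_nonneg hΔ0]
    rw [habs] at hd
    have := le_abs_self (φ (g (h+vstar) - (a₀⁻¹*β + 8*K*S^2)) - φ (g (h+vstar)))
    linarith
  rw [hLφ] at hLε ⊢
  have hfinal : φ (g (h + w)) ≤ ε + G * (a₀⁻¹*β + 8*K*S^2) := by linarith
  have ha₀i : (0:ℝ) ≤ a₀⁻¹ := inv_nonneg.mpr ha₀.le
  nlinarith [hfinal, hε, hβ0, sq_nonneg κ₀, mul_nonneg hK (sq_nonneg S), hG,
    mul_nonneg (mul_nonneg hG ha₀i) hε, mul_nonneg hG hε, mul_nonneg hG hβ0,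
    mul_nonneg hG (mul_nonneg hK (sq_nonneg S)),
    mul_nonneg (mul_nonneg hG ha₀i) (mul_nonneg hK (sq_nonneg S)),
    mul_nonneg hG (sq_nonneg κ₀), mul_nonneg (mul_nonneg hG ha₀i) (sq_nonneg κ₀),
    mul_nonneg (mul_nonneg hG ha₀i) hβ0]
end
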